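/- arXiv:1904.02787 — 4 statements merged into one kernel-verified Lean document; each statement's English description precedes it below -/
import Mathlib

section
/- For every natural number n ≥ 1, 2·o_n − 5·o_{n+1} + 4·o_{n+2} − o_{n+3} = 4n; consequently every integer divisible by 4 can be written as an integer linear combination of exactly four octahedral numbers. -/
/-- Octahedral numbers: oₙ = n(2n²+1)/3. -/
def oct (n : ℕ) : ℤ := (n : ℤ) * (2 * n ^ 2 + 1) / 3

theorem Int.three_dvd_mul_two_sq_add_one (x : ℤ) : 3 ∣ x * (2 * x ^ 2 + 1) := by
  have hzmod : ∀ y : ZMod 3, y * (2 * y ^ 2 + 1) = 0 := by decide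
  exact (ZMod.intCast_zmod_eq_zero_iff_dvd _ 3).mp (by push_cast; exact hzmod x)

theorem three_mul_oct (n : ℕ) : 3 * oct n = n * (2 * (n : ℤ) ^ 2 + 1) :=
  Int.mul_ediv_cancel' (Int.three_dvd_mul_two_sq_add_one n)

theorem oct_linear_combination (n : ℕ) :
    2 * oct n - 5 * oct (n + 1) + 4 * oct (n + 2) - oct (n + 3) = 4 * (n : ℤ) := by
  have h₀ := three_mul_oct n
  have h₁ := three_mul_oct (n + 1)
  have h₂ := three_mul_oct (n + 2)
  have h₃ := three_mul_oct (n + 3)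
  push_cast at h₁ h₂ h₃
  refine mul_left_cancel₀ (three_ne_zero (α := ℤ)) ?_
  linear_combination 2 * h₀ - 5 * h₁ + 4 * h₂ - h₃

/-- 2·oₙ − 5·oₙ₊₁ + 4·oₙ₊₂ − oₙ₊₃ = 4n for all n ≥ 1; consequently every integer
divisible by 4 is an integer combination of exactly four octahedral numbers. -/
theorem octahedral_combination :
    (∀ n : ℕ, 1 ≤ n →
      2 * oct n - 5 * oct (n + 1) + 4 * oct (n + 2) - oct (n + 3) = 4 * (n : ℤ)) ∧
    (∀ m : ℤ, 4 ∣ m → ∃ n : ℕ, 1 ≤ n ∧ ∃ a₁ a₂ a₃ a₄ : ℤ,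
      m = a₁ * oct n + a₂ * oct (n + 1) + a₃ * oct (n + 2) + a₄ * oct (n + 3)) := by
  refine ⟨fun n _ => oct_linear_combination n, ?_⟩
  rintro m ⟨k, rfl⟩
  have h₁ := oct_linear_combination 1
  exact ⟨1, le_rfl, 2 * k, -5 * k, 4 * k, -k, by push_cast at h₁; linear_combination -k * h₁⟩
end

section
/- For every natural number n ≥ 1, 5·i_n − 12·i_{n+1} + 9·i_{n+2} − 2·i_{n+3} = 45n; consequently every integer divisible by 45 can be written as an integer linear combination of exactly four icosahedral numbers. -/
/-- Icosahedral numbers: iₙ = n(5n²−5n+2)/2. -/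
def icos (n : ℕ) : ℤ := (n : ℤ) * (5 * n ^ 2 - 5 * n + 2) / 2

theorem two_mul_icos (n : ℕ) : 2 * icos n = (n : ℤ) * (5 * n ^ 2 - 5 * n + 2) := by
  have hdvd : (2 : ℤ) ∣ (n : ℤ) * (5 * n ^ 2 - 5 * n + 2) := by
    obtain ⟨k, hk⟩ := Int.even_mul_pred_self (n : ℤ)
    exact ⟨5 * n * k + n, by linear_combination 5 * (n : ℤ) * hk⟩
  exact Int.mul_ediv_cancel' hdvd

theorem icos_combination_eq (n : ℕ) :
    5 * icos n - 12 * icos (n + 1) + 9 * icos (n + 2) - 2 * icos (n + 3) = 45 * (n : ℤ) := by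
  have h₀ := two_mul_icos n
  have h₁ := two_mul_icos (n + 1)
  have h₂ := two_mul_icos (n + 2)
  have h₃ := two_mul_icos (n + 3)
  push_cast at h₁ h₂ h₃
  refine mul_left_cancel₀ (two_ne_zero (α := ℤ)) ?_
  linear_combination 5 * h₀ - 12 * h₁ + 9 * h₂ - 2 * h₃

/-- 5·iₙ − 12·iₙ₊₁ + 9·iₙ₊₂ − 2·iₙ₊₃ = 45n for all n ≥ 1; consequently every integer
divisible by 45 is an integer combination of exactly four icosahedral numbers. -/
theorem icosahedral_combination :
    (∀ n : ℕ, 1 ≤ n →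
      5 * icos n - 12 * icos (n + 1) + 9 * icos (n + 2) - 2 * icos (n + 3) = 45 * (n : ℤ)) ∧
    (∀ m : ℤ, 45 ∣ m → ∃ n : ℕ, 1 ≤ n ∧ ∃ a₁ a₂ a₃ a₄ : ℤ,
      m = a₁ * icos n + a₂ * icos (n + 1) + a₃ * icos (n + 2) + a₄ * icos (n + 3)) := by
  refine ⟨fun n _ => icos_combination_eq n, ?_⟩
  rintro m ⟨k, rfl⟩
  refine ⟨1, le_rfl, 5 * k, -12 * k, 9 * k, -2 * k, ?_⟩
  linear_combination (-k) * icos_combination_eq 1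
end

section
/- Let d > 1 be an even integer not divisible by 3. Then for every natural number n ≥ 1, d divides t_{n+2d} − t_n; that is, the sequence of tetrahedral numbers is periodic modulo d with the period dividing 2d. -/
/-!
Since `6 tₙ = (n+1)³ - (n+1)`, expanding the cube gives
`3 (t_{n+2d} - tₙ) = d (3(n+1)² + 6(n+1)d + (2d)² - 1)`,
and `3 ∣ (2d)² - 1` by Fermat's little theorem as soon as `3 ∤ d`.
-/

/-- Tetrahedral numbers: tₙ = n(n+1)(n+2)/6. -/
def tet (n : ℕ) : ℤ := (n : ℤ) * (n + 1) * (n + 2) / 6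

theorem six_mul_tet (n : ℕ) : 6 * tet n = n * (n + 1) * (n + 2) := by
  have hdvd : 6 ∣ n * (n + 1) * (n + 2) := by
    simpa [Nat.ascFactorial_succ, Nat.factorial, mul_comm, mul_assoc]
      using Nat.factorial_dvd_ascFactorial n 3
  exact Int.mul_ediv_cancel' (by exact_mod_cast hdvd)

theorem six_mul_tet_add_sub (n k : ℕ) :
    6 * (tet (n + k) - tet n) = k * (3 * (n + 1) ^ 2 + 3 * (n + 1) * k + k ^ 2 - 1) := by
  rw [mul_sub, six_mul_tet, six_mul_tet]
  push_cast
  ring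

theorem tetrahedral_period_even_not_three_general (d : ℕ)
    (h3 : ¬ (3 ∣ d)) (n : ℕ) :
    (d : ℤ) ∣ tet (n + 2 * d) - tet n := by
  have hcoprime : IsCoprime ((2 * d : ℕ) : ℤ) 3 :=
    ((Prime.coprime_iff_not_dvd Int.prime_three).mpr (by omega)).symm
  obtain ⟨c, hc⟩ := Int.prime_dvd_pow_sub_one Nat.prime_three hcoprime
  refine ⟨(n + 1) ^ 2 + 2 * (n + 1) * d + c, mul_left_cancel₀ (by norm_num : (6 : ℤ) ≠ 0) ?_⟩
  have hdiff := six_mul_tet_add_sub n (2 * d)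
  push_cast at hdiff hc
  linear_combination hdiff + 2 * (d : ℤ) * hc

/-- If d > 1 is even and not divisible by 3, then d divides tₙ₊₂d − tₙ for all n ≥ 1. -/
theorem tetrahedral_period_even_not_three (d : ℕ) (hd : 1 < d) (heven : Even d)
    (h3 : ¬ (3 ∣ d)) (n : ℕ) (hn : 1 ≤ n) :
    (d : ℤ) ∣ tet (n + 2 * d) - tet n :=
  tetrahedral_period_even_not_three_general d h3 n
end

section
/- Let d > 1 be an odd integer divisible by 3. Then for every natural number n ≥ 1, d divides t_{n+3d} − t_n; that is, the sequence of tetrahedral numbers is periodic modulo d with the period dividing 3d. -/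
lemma six_dvd_mul_add_one_mul_add_two (m : ℤ) : 6 ∣ m * (m + 1) * (m + 2) := by
  refine (ZMod.intCast_zmod_eq_zero_iff_dvd _ 6).mp ?_
  push_cast
  generalize (m : ZMod 6) = x
  revert x
  decide

lemma tet_mul_six (n : ℕ) : tet n * 6 = n * (n + 1) * (n + 2) :=
  Int.ediv_mul_cancel (six_dvd_mul_add_one_mul_add_two n)

lemma tet_add_sub_mul_six (n m : ℕ) :
    (tet (n + m) - tet n) * 6 = m * (3 * n ^ 2 + 3 * n * m + m ^ 2 + 6 * n + 3 * m + 2) := by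
  rw [sub_mul, tet_mul_six, tet_mul_six]
  push_cast
  ring

lemma even_tet_add_sub_cofactor {m : ℤ} (hm : Odd m) (n : ℤ) :
    Even (3 * n ^ 2 + 3 * n * m + m ^ 2 + 6 * n + 3 * m + 2) := by
  obtain ⟨c, rfl⟩ := hm
  obtain ⟨k, hk⟩ := Int.even_mul_succ_self n
  exact ⟨3 * k + 3 * n + 3 * n * c + 2 * c ^ 2 + 5 * c + 3, by linear_combination 3 * hk⟩

theorem tetrahedral_period_odd_three_general (d : ℕ) (hodd : Odd d) (n : ℕ) :
    (d : ℤ) ∣ tet (n + 3 * d) - tet n := by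
  have h3d : Odd ((3 * d : ℕ) : ℤ) := by exact_mod_cast (by decide : Odd 3).mul hodd
  obtain ⟨k, hk⟩ := even_tet_add_sub_cofactor h3d n
  refine ⟨k, mul_right_cancel₀ (b := (6 : ℤ)) (by norm_num) ?_⟩
  rw [tet_add_sub_mul_six, hk]
  push_cast
  ring

/-- If d > 1 is odd and divisible by 3, then d divides tₙ₊₃d − tₙ for all n ≥ 1. -/
theorem tetrahedral_period_odd_three (d : ℕ) (hd : 1 < d) (hodd : Odd d)
    (h3 : 3 ∣ d) (n : ℕ) (hn : 1 ≤ n) :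
    (d : ℤ) ∣ tet (n + 3 * d) - tet n :=
  tetrahedral_period_odd_three_general d hodd n
end
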